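/- arXiv:2512.22754 — 3 statements merged into one kernel-verified Lean document; each statement's English description precedes it below -/
import Mathlib

section
/- Let n ≥ 3, let m be the minimum number of parts in any partition of all 3-subsets of [n] into packings P(2,3,n) (so m = n-2 if n ≡ 1,3 mod 6 and n ≠ 7; m = n-1 if n = 7 or n ≡ 0,2,5 mod 6, n ≠ 6; m = n if n = 6 or n ≡ 4 mod 6), and let g ≥ m. If there exists an orthogonal array OA(3,n+2,g), then there exists a tiling TOC_{g+1}(n,4,3): a partition of the set of all weight-3 words of length n over Z_{g+1} into g^3 pairwise disjoint codes, each of size C(n,3) and minimum Hamming distance 4. -/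
def isOA3 (N g : ℕ) (M : Fin (g ^ 3) → Fin N → Fin g) : Prop :=
  ∀ c₁ c₂ c₃ : Fin N, c₁ ≠ c₂ → c₁ ≠ c₃ → c₂ ≠ c₃ →
    ∀ a b c : Fin g, ∃! i, M i c₁ = a ∧ M i c₂ = b ∧ M i c₃ = c

namespace Stmt15Aux

/-! ### The value embedding `ZMod (G+1) → ZMod (G+2) \ {0}` -/

def eps (G : ℕ) (x : ZMod (G + 1)) : ZMod (G + 2) := ((x.val + 1 : ℕ) : ZMod (G + 2))

lemma eps_val (G : ℕ) (x : ZMod (G + 1)) : (eps G x).val = x.val + 1 :=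
  ZMod.val_cast_of_lt (by have := ZMod.val_lt x; omega)

lemma eps_ne_zero (G : ℕ) (x : ZMod (G + 1)) : eps G x ≠ 0 := by
  intro h
  have h1 := eps_val G x
  rw [h] at h1
  simp at h1

lemma eps_inj {G : ℕ} {x y : ZMod (G + 1)} (h : eps G x = eps G y) : x = y := by
  have h1 := eps_val G x
  rw [h, eps_val] at h1
  exact ZMod.val_injective _ (by omega)

lemma eps_of_ne {G : ℕ} {y : ZMod (G + 2)} (hy : y ≠ 0) :
    eps G ((y.val - 1 : ℕ) : ZMod (G + 1)) = y := by
  have h1 : y.val ≠ 0 := fun h => hy (by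
    have := ZMod.natCast_zmod_val y
    rw [h] at this; simpa using this.symm)
  have h2 : y.val < G + 2 := ZMod.val_lt y
  have h3 : ((y.val - 1 : ℕ) : ZMod (G + 1)).val = y.val - 1 :=
    ZMod.val_cast_of_lt (by omega)
  unfold eps
  rw [h3]
  have h4 : y.val - 1 + 1 = y.val := by omega
  rw [h4, ZMod.natCast_zmod_val]



variable {n G : ℕ}

/-- column of a position -/
def colOf {n : ℕ} (p : Fin n) : Fin (n + 2) := Fin.castAdd 2 p

lemma colOf_inj {p q : Fin n} (h : colOf p = colOf q) : p = q := by
  have hv : (colOf p).val = (colOf q).val := congrArg Fin.val h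
  exact Fin.ext (show (p : ℕ) = (q : ℕ) from hv)

/-- the shift of a triple -/
def shf (n G : ℕ) (S : Finset (Fin n)) : ZMod (G + 1) :=
  (((∑ p ∈ S, (p : ℕ)) % n : ℕ) : ZMod (G + 1))

/-- the value of row `i` at position `p`, as an element of `ZMod (G+1)` -/
def mval (M : Fin ((G + 1) ^ 3) → Fin (n + 2) → Fin (G + 1))
    (i : Fin ((G + 1) ^ 3)) (p : Fin n) : ZMod (G + 1) :=
  ((M i (colOf p) : ℕ) : ZMod (G + 1))

lemma mval_inj {M : Fin ((G + 1) ^ 3) → Fin (n + 2) → Fin (G + 1)}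
    {i j : Fin ((G + 1) ^ 3)} {p : Fin n} (h : mval M i p = mval M j p) :
    M i (colOf p) = M j (colOf p) := by
  have h1 : (mval M i p).val = (M i (colOf p) : ℕ) := ZMod.val_cast_of_lt (M i (colOf p)).isLt
  have h2 : (mval M j p).val = (M j (colOf p) : ℕ) := ZMod.val_cast_of_lt (M j (colOf p)).isLt
  exact Fin.ext (by rw [← h1, ← h2, h])

/-- the codeword of row `i` supported on `S` -/
def wd (M : Fin ((G + 1) ^ 3) → Fin (n + 2) → Fin (G + 1))
    (i : Fin ((G + 1) ^ 3)) (S : Finset (Fin n)) : Fin n → ZMod (G + 2) :=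
  fun p => if p ∈ S then eps G (mval M i p + shf n G S) else 0

variable {M : Fin ((G + 1) ^ 3) → Fin (n + 2) → Fin (G + 1)}

lemma wd_ne_zero_iff {i : Fin ((G + 1) ^ 3)} {S : Finset (Fin n)} {p : Fin n} :
    wd M i S p ≠ 0 ↔ p ∈ S := by
  unfold wd
  split
  · next hp => simpa [hp] using eps_ne_zero G (mval M i p + shf n G S)
  · next hp => simp [hp]

lemma wd_filter (i : Fin ((G + 1) ^ 3)) (S : Finset (Fin n)) :
    (Finset.univ.filter fun p => wd M i S p ≠ 0) = S := by
  ext p; simp [wd_ne_zero_iff]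

lemma wd_norm (i : Fin ((G + 1) ^ 3)) (S : Finset (Fin n)) :
    hammingNorm (wd M i S) = S.card := by
  have := wd_filter (M := M) i S
  simpa [hammingNorm] using congrArg Finset.card this

lemma wd_inj_S {i j : Fin ((G + 1) ^ 3)} {S T : Finset (Fin n)}
    (h : wd M i S = wd M j T) : S = T := by
  have h1 := wd_filter (M := M) i S
  rw [h, wd_filter] at h1
  exact h1.symm



variable {n G : ℕ}

lemma shf_proper (hn : 3 ≤ n) (hng : n ≤ G + 1 ∨ n = 3) {S T : Finset (Fin n)}
    (hS : S.card = 3) (hT : T.card = 3) (hST : (S ∩ T).card = 2) :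
    shf n G S ≠ shf n G T := by
  rcases hng with hng | rfl
  · -- main case : n ≤ G + 1
    have h1 : (S \ T).card = 1 := by
      have := Finset.card_sdiff_add_card_inter S T; omega
    have h2 : (T \ S).card = 1 := by
      have := Finset.card_sdiff_add_card_inter T S
      rw [Finset.inter_comm] at this; omega
    obtain ⟨c, hc⟩ := Finset.card_eq_one.1 h1
    obtain ⟨c', hc'⟩ := Finset.card_eq_one.1 h2
    have hcc' : c ≠ c' := by
      intro h
      have h3 : c ∈ S \ T := hc ▸ Finset.mem_singleton_self c
      have h4 : c' ∈ T \ S := hc' ▸ Finset.mem_singleton_self c'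
      rw [← h] at h4
      exact (Finset.mem_sdiff.1 h3).2 (Finset.mem_sdiff.1 h4).1
    have hsumS : ∑ p ∈ S, (p : ℕ) = (∑ p ∈ S ∩ T, (p : ℕ)) + (c : ℕ) := by
      have h5 : S ∩ T ⊆ S := Finset.inter_subset_left
      have h6 : (∑ p ∈ S \ (S ∩ T), (p : ℕ)) + (∑ p ∈ S ∩ T, (p : ℕ))
          = ∑ p ∈ S, (p : ℕ) := Finset.sum_sdiff h5
      rw [Finset.sdiff_inter_self_left, hc, Finset.sum_singleton] at h6
      omega
    have hsumT : ∑ p ∈ T, (p : ℕ) = (∑ p ∈ S ∩ T, (p : ℕ)) + (c' : ℕ) := by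
      have h5 : T ∩ S ⊆ T := Finset.inter_subset_left
      have h6 : (∑ p ∈ T \ (T ∩ S), (p : ℕ)) + (∑ p ∈ T ∩ S, (p : ℕ))
          = ∑ p ∈ T, (p : ℕ) := Finset.sum_sdiff h5
      rw [Finset.sdiff_inter_self_left, hc', Finset.sum_singleton,
        Finset.inter_comm] at h6
      omega
    intro heq
    unfold shf at heq
    have hlt1 : (∑ p ∈ S, (p : ℕ)) % n < G + 1 :=
      lt_of_lt_of_le (Nat.mod_lt _ (by omega)) hng
    have hlt2 : (∑ p ∈ T, (p : ℕ)) % n < G + 1 :=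
      lt_of_lt_of_le (Nat.mod_lt _ (by omega)) hng
    have hv : (∑ p ∈ S, (p : ℕ)) % n = (∑ p ∈ T, (p : ℕ)) % n := by
      have := congrArg ZMod.val heq
      rwa [ZMod.val_cast_of_lt hlt1, ZMod.val_cast_of_lt hlt2] at this
    rw [hsumS, hsumT] at hv
    have hmod : (c : ℕ) ≡ (c' : ℕ) [MOD n] :=
      Nat.ModEq.add_left_cancel' _ hv
    have : (c : ℕ) = (c' : ℕ) := by
      have := hmod
      unfold Nat.ModEq at this
      rw [Nat.mod_eq_of_lt c.isLt, Nat.mod_eq_of_lt c'.isLt] at this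
      exact this
    exact hcc' (Fin.ext this)
  · -- degenerate case n = 3 : impossible
    have hS' : S = Finset.univ := Finset.eq_univ_of_card S (by simpa using hS)
    have hT' : T = Finset.univ := Finset.eq_univ_of_card T (by simpa using hT)
    rw [hS', hT'] at hST
    simp at hST


variable {M : Fin ((G + 1) ^ 3) → Fin (n + 2) → Fin (G + 1)}

lemma wd_same_row (hM : isOA3 (n + 2) (G + 1) M) {i j : Fin ((G + 1) ^ 3)}
    {S : Finset (Fin n)} (hS : S.card = 3) (h : wd M i S = wd M j S) : i = j := by
  obtain ⟨a, b, c, hab, hac, hbc, rfl⟩ := Finset.card_eq_three.1 hS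
  have key : ∀ p ∈ ({a, b, c} : Finset (Fin n)), M i (colOf p) = M j (colOf p) := by
    intro p hp
    have h1 := congrFun h p
    unfold wd at h1
    rw [if_pos hp, if_pos hp] at h1
    exact mval_inj (add_right_cancel (eps_inj h1))
  have hma := key a (by simp)
  have hmb := key b (by simp)
  have hmc := key c (by simp)
  have hcab : colOf a ≠ colOf b := fun h => hab (colOf_inj h)
  have hcac : colOf a ≠ colOf c := fun h => hac (colOf_inj h)
  have hcbc : colOf b ≠ colOf c := fun h => hbc (colOf_inj h)
  obtain ⟨k, -, hk⟩ := hM (colOf a) (colOf b) (colOf c) hcab hcac hcbc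
    (M j (colOf a)) (M j (colOf b)) (M j (colOf c))
  have hi := hk i ⟨hma, hmb, hmc⟩
  have hj := hk j ⟨rfl, rfl, rfl⟩
  rw [hi, hj]

lemma wd_dist (hn : 3 ≤ n) (hng : n ≤ G + 1 ∨ n = 3) {i : Fin ((G + 1) ^ 3)}
    {S T : Finset (Fin n)} (hS : S.card = 3) (hT : T.card = 3) (hne : S ≠ T) :
    4 ≤ hammingDist (wd M i S) (wd M i T) := by
  have hdist : hammingDist (wd M i S) (wd M i T)
      = (Finset.univ.filter fun p => wd M i S p ≠ wd M i T p).card := rfl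
  set D := Finset.univ.filter fun p => wd M i S p ≠ wd M i T p with hD
  have hmemD : ∀ p : Fin n, wd M i S p ≠ wd M i T p → p ∈ D := by
    intro p hp; simp [hD, hp]
  have hST : ∀ p ∈ S \ T, p ∈ D := by
    intro p hp
    obtain ⟨h1, h2⟩ := Finset.mem_sdiff.1 hp
    apply hmemD
    have hx : wd M i S p ≠ 0 := wd_ne_zero_iff.2 h1
    have hy : wd M i T p = 0 := by
      by_contra hy; exact h2 (wd_ne_zero_iff.1 hy)
    rw [hy]; exact hx
  have hTS : ∀ p ∈ T \ S, p ∈ D := by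
    intro p hp
    obtain ⟨h1, h2⟩ := Finset.mem_sdiff.1 hp
    apply hmemD
    have hx : wd M i T p ≠ 0 := wd_ne_zero_iff.2 h1
    have hy : wd M i S p = 0 := by
      by_contra hy; exact h2 (wd_ne_zero_iff.1 hy)
    rw [hy]; exact (fun h => hx h.symm)
  have hk3 : (S ∩ T).card ≤ 3 := le_trans (Finset.card_le_card Finset.inter_subset_left) (le_of_eq hS)
  have hkne3 : (S ∩ T).card ≠ 3 := by
    intro h3
    have : S ∩ T = S := Finset.eq_of_subset_of_card_le Finset.inter_subset_left (by omega)
    have hsub : S ⊆ T := by rw [← this]; exact Finset.inter_subset_right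
    exact hne (Finset.eq_of_subset_of_card_le hsub (by omega))
  have hcard1 : (S \ T).card = 3 - (S ∩ T).card := by
    have := Finset.card_sdiff_add_card_inter S T; omega
  have hcard2 : (T \ S).card = 3 - (S ∩ T).card := by
    have := Finset.card_sdiff_add_card_inter T S
    rw [Finset.inter_comm] at this; omega
  have hdisj : Disjoint (S \ T) (T \ S) := disjoint_sdiff_sdiff
  by_cases hk2 : (S ∩ T).card = 2
  · -- shared pair : common positions also contribute
    have hshf := shf_proper (G := G) hn hng hS hT hk2
    have hIT : ∀ p ∈ S ∩ T, p ∈ D := by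
      intro p hp
      obtain ⟨h1, h2⟩ := Finset.mem_inter.1 hp
      apply hmemD
      unfold wd
      rw [if_pos h1, if_pos h2]
      intro h
      exact hshf (add_left_cancel (eps_inj h))
    have hsub : (S \ T) ∪ (T \ S) ∪ (S ∩ T) ⊆ D := by
      intro p hp
      rcases Finset.mem_union.1 hp with hp | hp
      · rcases Finset.mem_union.1 hp with hp | hp
        · exact hST p hp
        · exact hTS p hp
      · exact hIT p hp
    have hdisj2 : Disjoint ((S \ T) ∪ (T \ S)) (S ∩ T) := by
      rw [Finset.disjoint_left]
      intro p hp hp2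
      obtain ⟨h1, h2⟩ := Finset.mem_inter.1 hp2
      rcases Finset.mem_union.1 hp with hp | hp
      · exact (Finset.mem_sdiff.1 hp).2 h2
      · exact (Finset.mem_sdiff.1 hp).2 h1
    have hc : ((S \ T) ∪ (T \ S) ∪ (S ∩ T)).card = 4 := by
      rw [Finset.card_union_of_disjoint hdisj2, Finset.card_union_of_disjoint hdisj]
      omega
    rw [hdist]
    calc 4 = ((S \ T) ∪ (T \ S) ∪ (S ∩ T)).card := hc.symm
    _ ≤ D.card := Finset.card_le_card hsub
  · -- supports share at most one point
    have hsub : (S \ T) ∪ (T \ S) ⊆ D := by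
      intro p hp
      rcases Finset.mem_union.1 hp with hp | hp
      · exact hST p hp
      · exact hTS p hp
    have hc : ((S \ T) ∪ (T \ S)).card ≥ 4 := by
      rw [Finset.card_union_of_disjoint hdisj]
      omega
    rw [hdist]
    exact le_trans hc (Finset.card_le_card hsub)

/-- Bound from the orthogonal array: `OA(3, n+2, g)` with `g ≥ 2` forces `n ≤ g`. -/
lemma oa_bound (n g : ℕ) (hn : 3 ≤ n) (hg2 : 2 ≤ g)
    (M : Fin (g ^ 3) → Fin (n + 2) → Fin g) (hM : isOA3 (n + 2) g M) : n ≤ g := by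
  obtain ⟨c0, hc0⟩ : ∃ c : Fin (n + 2), c.val = 0 := ⟨⟨0, by omega⟩, rfl⟩
  obtain ⟨c1, hc1⟩ : ∃ c : Fin (n + 2), c.val = 1 := ⟨⟨1, by omega⟩, rfl⟩
  obtain ⟨L, hL⟩ : ∃ c : Fin (n + 2), c.val = n + 1 := ⟨⟨n + 1, by omega⟩, rfl⟩
  obtain ⟨z, hzv⟩ : ∃ z : Fin g, z.val = 0 := ⟨⟨0, by omega⟩, rfl⟩
  obtain ⟨o, hov⟩ : ∃ o : Fin g, o.val = 1 := ⟨⟨1, by omega⟩, rfl⟩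
  have hzo : z ≠ o := Fin.ne_of_val_ne (by omega)
  have h01 : c0 ≠ c1 := Fin.ne_of_val_ne (by omega)
  have h0L : c0 ≠ L := Fin.ne_of_val_ne (by omega)
  have h1L : c1 ≠ L := Fin.ne_of_val_ne (by omega)
  obtain ⟨x, hx, -⟩ := hM c0 c1 L h01 h0L h1L o z z
  -- columns 1..n
  have hcj : ∀ j : Fin n, ∃ cj : Fin (n + 2), cj.val = j.val + 1 :=
    fun j => ⟨⟨j.val + 1, by omega⟩, rfl⟩
  choose cj hcjv using hcj
  have hc0cj : ∀ j, c0 ≠ cj j := fun j => Fin.ne_of_val_ne (by rw [hcjv, hc0]; omega)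
  have hLcj : ∀ j, L ≠ cj j := fun j =>
    Fin.ne_of_val_ne (by rw [hcjv, hL]; have := (j.isLt); omega)
  have hstep := fun j : Fin n =>
    hM c0 L (cj j) h0L (hc0cj j) (hLcj j) z z (M x (cj j))
  choose φ hφ hφu using hstep
  have hinj : Function.Injective (fun j => M (φ j) c1) := by
    intro j j' hjj
    simp only at hjj
    by_contra hne
    -- first : φ j = φ j'
    obtain ⟨w, -, hw⟩ := hM c0 L c1 h0L h01 (Ne.symm h1L) z z (M (φ j) c1)
    have e1 : φ j = w := hw (φ j) ⟨(hφ j).1, (hφ j).2.1, rfl⟩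
    have e2 : φ j' = w := hw (φ j') ⟨(hφ j').1, (hφ j').2.1, hjj.symm⟩
    have eφ : φ j = φ j' := e1.trans e2.symm
    -- then : φ j = x , contradiction on column c0
    have hcc : cj j ≠ cj j' := by
      intro h
      have hv := congrArg Fin.val h
      rw [hcjv, hcjv] at hv
      exact hne (Fin.ext (by omega))
    obtain ⟨w2, -, hw2⟩ := hM (cj j) (cj j') L hcc
      (Ne.symm (hLcj j)) (Ne.symm (hLcj j')) (M x (cj j)) (M x (cj j')) z
    have f1 : φ j = w2 := hw2 (φ j) ⟨(hφ j).2.2, by rw [eφ]; exact (hφ j').2.2, (hφ j).2.1⟩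
    have f2 : x = w2 := hw2 x ⟨rfl, rfl, hx.2.2⟩
    have hφx : φ j = x := f1.trans f2.symm
    have hcontr : z = o := by rw [← (hφ j).1, hφx, hx.1]
    exact hzo hcontr
  have := Fintype.card_le_of_injective _ hinj
  simpa using this

/-- The main construction: given the coloring hypothesis and an `OA(3,n+2,G+1)`,
build the tiling of the weight-3 words over `ZMod (G+2)`. -/
lemma main (n G : ℕ) (hn : 3 ≤ n) (hng : n ≤ G + 1 ∨ n = 3)
    (M : Fin ((G + 1) ^ 3) → Fin (n + 2) → Fin (G + 1))
    (hM : isOA3 (n + 2) (G + 1) M) :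
    ∃ P : Finset (Finset (Fin n → ZMod (G + 2))),
      P.card = (G + 1) ^ 3 ∧
      (∀ C ∈ P, C.card = Nat.choose n 3 ∧ (∀ x ∈ C, hammingNorm x = 3) ∧
        ∀ x ∈ C, ∀ y ∈ C, x ≠ y → 4 ≤ hammingDist x y) ∧
      (∀ C ∈ P, ∀ D ∈ P, C ≠ D → Disjoint C D) ∧
      ∀ x : Fin n → ZMod (G + 2), hammingNorm x = 3 → ∃ C ∈ P, x ∈ C := by
  classical
  set Cd : Fin ((G + 1) ^ 3) → Finset (Fin n → ZMod (G + 2)) :=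
    fun i => (Finset.univ.powersetCard 3).image (wd M i) with hCd
  have hwd_inj : ∀ i : Fin ((G + 1) ^ 3), Function.Injective (wd M i) :=
    fun i S T h => wd_inj_S h
  have hmem_tri : ∀ S : Finset (Fin n), S.card = 3 →
      S ∈ (Finset.univ : Finset (Fin n)).powersetCard 3 :=
    fun S hS => Finset.mem_powersetCard.2 ⟨Finset.subset_univ _, hS⟩
  have htri_card : ∀ S : Finset (Fin n),
      S ∈ (Finset.univ : Finset (Fin n)).powersetCard 3 → S.card = 3 :=
    fun S hS => (Finset.mem_powersetCard.1 hS).2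
  have hCd_inj : Function.Injective Cd := by
    intro i j hij
    obtain ⟨S0, -, hS0card⟩ :=
      Finset.exists_subset_card_eq (s := (Finset.univ : Finset (Fin n))) (n := 3) (by simpa using hn)
    have hmem : wd M i S0 ∈ Cd i :=
      Finset.mem_image_of_mem _ (hmem_tri S0 hS0card)
    rw [hij] at hmem
    obtain ⟨T, -, hTw⟩ := Finset.mem_image.1 hmem
    have hTS : T = S0 := wd_inj_S hTw
    rw [hTS] at hTw
    exact (wd_same_row hM hS0card hTw).symm
  refine ⟨Finset.univ.image Cd, ?_, ?_, ?_, ?_⟩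
  · rw [Finset.card_image_of_injective _ hCd_inj, Finset.card_univ]
    simp
  · intro C hC
    obtain ⟨i, -, rfl⟩ := Finset.mem_image.1 hC
    refine ⟨?_, ?_, ?_⟩
    · rw [hCd]
      rw [Finset.card_image_of_injective _ (hwd_inj i), Finset.card_powersetCard,
        Finset.card_univ, Fintype.card_fin]
    · intro x hx
      obtain ⟨S, hS, rfl⟩ := Finset.mem_image.1 hx
      rw [wd_norm]
      exact htri_card S hS
    · intro x hx y hy hxy
      obtain ⟨S, hS, rfl⟩ := Finset.mem_image.1 hx
      obtain ⟨T, hT, rfl⟩ := Finset.mem_image.1 hy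
      have hne : S ≠ T := fun h => hxy (by rw [h])
      exact wd_dist hn hng (htri_card S hS) (htri_card T hT) hne
  · intro C hC D hD hCD
    obtain ⟨i, -, rfl⟩ := Finset.mem_image.1 hC
    obtain ⟨j, -, rfl⟩ := Finset.mem_image.1 hD
    rw [Finset.disjoint_left]
    intro x hxC hxD
    obtain ⟨S, hS, rfl⟩ := Finset.mem_image.1 hxC
    obtain ⟨T, -, hTw⟩ := Finset.mem_image.1 hxD
    have hTS : T = S := wd_inj_S hTw
    rw [hTS] at hTw
    exact hCD (by rw [wd_same_row hM (htri_card S hS) hTw])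
  · intro x hx
    have hScard : (Finset.univ.filter fun p => x p ≠ 0).card = 3 := hx
    set S : Finset (Fin n) := Finset.univ.filter fun p => x p ≠ 0 with hSdef
    have hxS : ∀ p, p ∈ S ↔ x p ≠ 0 := by
      intro p; rw [hSdef]; simp
    -- the target values in `ZMod (G+1)`
    set u : Fin n → ZMod (G + 1) := fun p => (((x p).val - 1 : ℕ) : ZMod (G + 1)) with hu
    have hw : ∀ p : Fin n, ∃ w : Fin (G + 1), ((w : ℕ) : ZMod (G + 1)) = u p - shf n G S :=
      fun p => ⟨⟨(u p - shf n G S).val, ZMod.val_lt _⟩, by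
        show (((u p - shf n G S).val : ℕ) : ZMod (G + 1)) = u p - shf n G S
        exact ZMod.natCast_zmod_val _⟩
    choose w hwv using hw
    obtain ⟨a, b, c, hab, hac, hbc, hSeq⟩ := Finset.card_eq_three.1 hScard
    have hSabc : S = {a, b, c} := hSeq
    have hcab : colOf a ≠ colOf b := fun h => hab (colOf_inj h)
    have hcac : colOf a ≠ colOf c := fun h => hac (colOf_inj h)
    have hcbc : colOf b ≠ colOf c := fun h => hbc (colOf_inj h)
    obtain ⟨i, hi, -⟩ := hM (colOf a) (colOf b) (colOf c) hcab hcac hcbc (w a) (w b) (w c)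
    have hxw : wd M i S = x := by
      funext p
      by_cases hp : p ∈ S
      · have hone : wd M i S p = eps G (mval M i p + shf n G S) := by
          unfold wd; rw [if_pos hp]
        have hpabc : p = a ∨ p = b ∨ p = c := by
          have := hSabc ▸ hp
          simpa using this
        have hMp : M i (colOf p) = w p := by
          rcases hpabc with rfl | rfl | rfl
          · exact hi.1
          · exact hi.2.1
          · exact hi.2.2
        have hmv : mval M i p = u p - shf n G S := by
          unfold mval; rw [hMp]; exact hwv p
        rw [hone, hmv, sub_add_cancel]
        exact eps_of_ne ((hxS p).1 hp)
      · have hzero : wd M i S p = 0 := by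
          unfold wd; rw [if_neg hp]
        have hxp : x p = 0 := by
          by_contra hne
          exact hp ((hxS p).2 hne)
        rw [hzero, hxp]
    refine ⟨Cd i, Finset.mem_image_of_mem _ (Finset.mem_univ i), ?_⟩
    rw [← hxw]
    exact Finset.mem_image_of_mem _ (hmem_tri S hScard)

end Stmt15Aux

/-- Let `m` be the minimum number of parts in a partition of all triples of
`[n]` into packings `P(2,3,n)` (given piecewise), and `g ≥ m`. If an
`OA(3,n+2,g)` exists, then there is a tiling `TOC_{g+1}(n,4,3)`: a partition
of all weight-3 words of length `n` over `Z_{g+1}` into `g³` pairwise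
disjoint codes, each of size `C(n,3)` and minimum Hamming distance 4. -/
theorem stmt15 (n m g : ℕ) (hn : 3 ≤ n) (hg : m ≤ g)
    (hm1 : (n % 6 = 1 ∨ n % 6 = 3) → n ≠ 7 → m = n - 2)
    (hm2 : n = 7 ∨ ((n % 6 = 0 ∨ n % 6 = 2 ∨ n % 6 = 5) ∧ n ≠ 6) → m = n - 1)
    (hm3 : n = 6 ∨ n % 6 = 4 → m = n)
    (hOA : ∃ M : Fin (g ^ 3) → Fin (n + 2) → Fin g, isOA3 (n + 2) g M) :
    ∃ P : Finset (Finset (Fin n → ZMod (g + 1))),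
      P.card = g ^ 3 ∧
      (∀ C ∈ P, C.card = Nat.choose n 3 ∧ (∀ x ∈ C, hammingNorm x = 3) ∧
        ∀ x ∈ C, ∀ y ∈ C, x ≠ y → 4 ≤ hammingDist x y) ∧
      (∀ C ∈ P, ∀ D ∈ P, C ≠ D → Disjoint C D) ∧
      ∀ x : Fin n → ZMod (g + 1), hammingNorm x = 3 → ∃ C ∈ P, x ∈ C := by
  -- first, the piecewise hypotheses give `n - 2 ≤ m`
  have hm' : n - 2 ≤ m := by
    by_cases h7 : n = 7
    · rw [hm2 (Or.inl h7)]; omega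
    · by_cases h6 : n = 6
      · rw [hm3 (Or.inl h6)]; omega
      · have h6lt : n % 6 = 0 ∨ n % 6 = 1 ∨ n % 6 = 2 ∨ n % 6 = 3 ∨ n % 6 = 4 ∨ n % 6 = 5 := by
          omega
        rcases h6lt with h | h | h | h | h | h
        · rw [hm2 (Or.inr ⟨Or.inl h, h6⟩)]; omega
        · rw [hm1 (Or.inl h) h7]
        · rw [hm2 (Or.inr ⟨Or.inr (Or.inl h), h6⟩)]; omega
        · rw [hm1 (Or.inr h) h7]
        · rw [hm3 (Or.inr h)]; omega
        · rw [hm2 (Or.inr ⟨Or.inr (Or.inr h), h6⟩)]; omega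
  obtain ⟨M, hM⟩ := hOA
  rcases g with _ | G
  · -- degenerate case `g = 0` : there are no weight-3 words over `ZMod 1`
    refine ⟨∅, by simp, by simp, by simp, ?_⟩
    intro x hx
    exfalso
    have hx0 : ∀ p, x p = 0 := fun p => Subsingleton.elim (α := ZMod 1) (x p) 0
    simp [hammingNorm, hx0] at hx
  · -- main case `g = G + 1`
    have hng : n ≤ G + 1 ∨ n = 3 := by
      rcases Nat.lt_or_ge (G + 1) 2 with h | h
      · right; omega
      · left; exact Stmt15Aux.oa_bound n (G + 1) hn h M hM
    exact Stmt15Aux.main n G hn hng M hM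
end

section
/- Let w, n be positive integers with n ≡ a (mod w), 0 ≤ a < w, 2a < w, and r = C(n,w)/⌊n/w⌋ an even integer. Suppose the complete w-uniform hypergraph K_n^w admits a 2-good almost-regular edge-coloring: a partition of all w-subsets of [n] into r classes F_{s,t} (1 ≤ s ≤ r/2, t ∈ {1,2}), each of size ⌊n/w⌋ in which every vertex has degree at most 1, such that each union A_s = F_{s,1} ∪ F_{s,2} is a linear hypergraph (every 2-subset of [n] lies in at most one member of A_s). Then there exists a tiling TOC_3(n,2w-1,w): a partition of the set of all weight-w words of length n over Z_3 into 2^{w-1}·r pairwise disjoint codes each of size ⌊2n/w⌋ = 2⌊n/w⌋ with pairwise Hamming distance at least 2w-1. -/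
open Finset

/-- Alternating walk in the two-colored subgraph. -/
def walkAux {ι : Type} (j0 : ι) (nf ng : ι → Option ι) : ℕ → Option ι
  | 0 => some j0
  | (m+1) => (walkAux j0 nf ng m).bind (if m % 2 = 0 then nf else ng)

section Konig
variable {ι A B : Type} [DecidableEq ι] [DecidableEq A] [DecidableEq B]

/-- Kempe-chain recoloring step for bipartite edge coloring. -/
lemma kempe {w : ℕ} (f : ι → A) (g : ι → B) (E' : Finset ι) (c : ι → Fin w)
    (hpf : ∀ i ∈ E', ∀ j ∈ E', i ≠ j → f i = f j → c i ≠ c j)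
    (hpg : ∀ i ∈ E', ∀ j ∈ E', i ≠ j → g i = g j → c i ≠ c j)
    (x0 : A) (y0 : B) (α β : Fin w)
    (hα : ∀ j ∈ E', f j = x0 → c j ≠ α)
    (hβ : ∀ j ∈ E', g j = y0 → c j ≠ β) :
    ∃ c' : ι → Fin w,
      (∀ i ∈ E', ∀ j ∈ E', i ≠ j → f i = f j → c' i ≠ c' j) ∧
      (∀ i ∈ E', ∀ j ∈ E', i ≠ j → g i = g j → c' i ≠ c' j) ∧
      (∀ j ∈ E', f j = x0 → c' j ≠ α) ∧
      (∀ j ∈ E', g j = y0 → c' j ≠ α) := by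
  classical
  by_cases hy : ∃ j, j ∈ E' ∧ g j = y0 ∧ c j = α
  case neg =>
    exact ⟨c, hpf, hpg, hα, fun j hj hgj hc => hy ⟨j, hj, hgj, hc⟩⟩
  obtain ⟨j0, hj0E, hj0g, hj0c⟩ := hy
  have hαβ : α ≠ β := fun h => hβ j0 hj0E hj0g (h ▸ hj0c)
  -- next-edge functions
  have hNF : ∀ j, ∃ o : Option ι,
      (∀ k, o = some k → k ∈ E' ∧ c k = β ∧ f k = f j) ∧
      (∀ k, k ∈ E' → c k = β → f k = f j → o = some k) := by
    intro j
    by_cases h : ∃ k, k ∈ E' ∧ c k = β ∧ f k = f j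
    · refine ⟨some h.choose, ?_, ?_⟩
      · intro k hk
        obtain rfl : h.choose = k := Option.some.inj hk
        exact h.choose_spec
      · intro k hkE hkc hkf
        obtain ⟨h1, h2, h3⟩ := h.choose_spec
        by_cases hne : h.choose = k
        · rw [hne]
        · exact absurd (h2.trans hkc.symm) (hpf _ h1 _ hkE hne (h3.trans hkf.symm))
    · exact ⟨none, by simp, fun k hkE hkc hkf => absurd ⟨k, hkE, hkc, hkf⟩ h⟩
  have hNG : ∀ j, ∃ o : Option ι,
      (∀ k, o = some k → k ∈ E' ∧ c k = α ∧ g k = g j) ∧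
      (∀ k, k ∈ E' → c k = α → g k = g j → o = some k) := by
    intro j
    by_cases h : ∃ k, k ∈ E' ∧ c k = α ∧ g k = g j
    · refine ⟨some h.choose, ?_, ?_⟩
      · intro k hk
        obtain rfl : h.choose = k := Option.some.inj hk
        exact h.choose_spec
      · intro k hkE hkc hkf
        obtain ⟨h1, h2, h3⟩ := h.choose_spec
        by_cases hne : h.choose = k
        · rw [hne]
        · exact absurd (h2.trans hkc.symm) (hpg _ h1 _ hkE hne (h3.trans hkf.symm))
    · exact ⟨none, by simp, fun k hkE hkc hkf => absurd ⟨k, hkE, hkc, hkf⟩ h⟩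
  choose nextF nf_spec nf_eq using hNF
  choose nextG ng_spec ng_eq using hNG
  set p : ℕ → Option ι := walkAux j0 nextF nextG with hp
  have p0 : p 0 = some j0 := rfl
  have pSucc : ∀ m, p (m+1) = (p m).bind (if m % 2 = 0 then nextF else nextG) :=
    fun m => rfl
  -- colors along the walk
  have W2 : ∀ m k, p m = some k → k ∈ E' ∧ c k = (if m % 2 = 0 then α else β) := by
    intro m
    induction m with
    | zero =>
      intro k hk
      obtain rfl : j0 = k := Option.some.inj hk
      simpa using ⟨hj0E, hj0c⟩
    | succ m ih =>
      intro k hk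
      rw [pSucc] at hk
      obtain ⟨j, hj, hjk⟩ := Option.bind_eq_some_iff.mp hk
      rcases Nat.mod_two_eq_zero_or_one m with hm | hm
      · rw [if_pos hm] at hjk
        obtain ⟨h1, h2, _⟩ := nf_spec j k hjk
        have : (m+1) % 2 = 1 := by omega
        rw [this]
        exact ⟨h1, by simpa using h2⟩
      · rw [hm] at hjk; rw [if_neg (by omega)] at hjk
        obtain ⟨h1, h2, _⟩ := ng_spec j k hjk
        have : (m+1) % 2 = 0 := by omega
        rw [this]
        exact ⟨h1, by simpa using h2⟩
  -- β-colored edges on the walk avoid x0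
  have W3 : ∀ m k, m % 2 = 1 → p m = some k → f k ≠ x0 := by
    intro m k hm hk
    match m, hm with
    | (m'+1), hm =>
      have hm' : m' % 2 = 0 := by omega
      rw [pSucc, if_pos hm'] at hk
      obtain ⟨j, hj, hjk⟩ := Option.bind_eq_some_iff.mp hk
      obtain ⟨_, _, hfk⟩ := nf_spec j k hjk
      obtain ⟨hjE, hjc⟩ := W2 m' j hj
      rw [if_pos hm'] at hjc
      rw [hfk]
      exact fun hfx => hα j hjE hfx hjc
  set K : ι → Prop := fun k => ∃ m, p m = some k with hK
  have hKj0 : K j0 := ⟨0, p0⟩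
  -- closure of the walk under incidence within the subgraph
  have W4 : ∀ m j, p m = some j → ∀ k, k ∈ E' → (c k = α ∨ c k = β) →
      (f k = f j ∨ g k = g j) → K k := by
    intro m j pm k hkE hkc hshare
    obtain ⟨hjE, hjc⟩ := W2 m j pm
    by_cases hkj : k = j
    · exact ⟨m, hkj ▸ pm⟩
    rcases Nat.mod_two_eq_zero_or_one m with hm | hm
    · rw [if_pos hm] at hjc
      rcases hkc with hkc | hkc
      · rcases hshare with hs | hs
        · exact absurd (hkc.trans hjc.symm) (hpf k hkE j hjE hkj hs)
        · exact absurd (hkc.trans hjc.symm) (hpg k hkE j hjE hkj hs)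
      · rcases hshare with hs | hs
        · refine ⟨m+1, ?_⟩
          rw [pSucc, pm, if_pos hm]
          exact nf_eq j k hkE hkc hs
        · -- k is a β-edge sharing the g-endpoint with the α-edge j
          match m, hm, pm with
          | 0, _, pm =>
            obtain rfl : j0 = j := Option.some.inj pm
            exact absurd hkc (hβ k hkE (hs.trans hj0g))
          | (m'+1), hm, pm =>
            have hm' : m' % 2 = 1 := by omega
            rw [pSucc, if_neg (by omega)] at pm
            obtain ⟨j'', hj'', hj''j⟩ := Option.bind_eq_some_iff.mp pm
            obtain ⟨_, _, hgj⟩ := ng_spec j'' j hj''j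
            obtain ⟨hj''E2, hcj''⟩ := W2 m' j'' hj''
            rw [if_neg (by omega)] at hcj''
            by_cases hkj'' : k = j''
            · exact ⟨m', hkj'' ▸ hj''⟩
            · exact absurd (hkc.trans hcj''.symm)
                (hpg k hkE j'' hj''E2 hkj'' (hs.trans hgj))
    · rw [if_neg (by omega)] at hjc
      rcases hkc with hkc | hkc
      · rcases hshare with hs | hs
        · -- k is an α-edge sharing the f-endpoint with the β-edge j
          match m, hm, pm with
          | (m'+1), hm, pm =>
            have hm' : m' % 2 = 0 := by omega
            rw [pSucc, if_pos hm'] at pm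
            obtain ⟨j'', hj'', hj''j⟩ := Option.bind_eq_some_iff.mp pm
            obtain ⟨_, _, hfj⟩ := nf_spec j'' j hj''j
            obtain ⟨hj''E2, hcj''⟩ := W2 m' j'' hj''
            rw [if_pos hm'] at hcj''
            by_cases hkj'' : k = j''
            · exact ⟨m', hkj'' ▸ hj''⟩
            · exact absurd (hkc.trans hcj''.symm)
                (hpf k hkE j'' hj''E2 hkj'' (hs.trans hfj))
        · refine ⟨m+1, ?_⟩
          rw [pSucc, pm, if_neg (by omega)]
          exact ng_eq j k hkE hkc hs
      · rcases hshare with hs | hs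
        · exact absurd (hkc.trans hjc.symm) (hpf k hkE j hjE hkj hs)
        · exact absurd (hkc.trans hjc.symm) (hpg k hkE j hjE hkj hs)
  -- the recoloring
  set c' : ι → Fin w := fun j => if K j then Equiv.swap α β (c j) else c j with hc'
  have c'_eq : ∀ j, c j ≠ α → c j ≠ β → c' j = c j := by
    intro j h1 h2
    rw [hc']
    dsimp only
    split
    · exact Equiv.swap_apply_of_ne_of_ne h1 h2
    · rfl
  have c'_mem : ∀ j, (c j = α ∨ c j = β) → (c' j = α ∨ c' j = β) := by
    intro j h
    rw [hc']
    dsimp only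
    split
    · rcases h with h | h <;> rw [h] <;> simp
    · exact h
  have hKiff : ∀ i ∈ E', ∀ j ∈ E', (c i = α ∨ c i = β) → (c j = α ∨ c j = β) →
      (f i = f j ∨ g i = g j) → (K i ↔ K j) := by
    intro i hi j hj hci hcj hs
    constructor
    · rintro ⟨m, pm⟩
      exact W4 m i pm j hj hcj (by rcases hs with h | h; exacts [Or.inl h.symm, Or.inr h.symm])
    · rintro ⟨m, pm⟩
      exact W4 m j pm i hi hci hs
  have swap_ne : ∀ i j, c i ≠ c j → Equiv.swap α β (c i) ≠ Equiv.swap α β (c j) :=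
    fun i j h => (Equiv.swap α β).injective.ne h
  have main : ∀ i ∈ E', ∀ j ∈ E', i ≠ j → (f i = f j ∨ g i = g j) →
      c i ≠ c j → c' i ≠ c' j := by
    intro i hi j hj hij hs hcij
    by_cases hiab : c i = α ∨ c i = β <;> by_cases hjab : c j = α ∨ c j = β
    · have hiff := hKiff i hi j hj hiab hjab hs
      rw [hc']; dsimp only
      by_cases hKi : K i
      · rw [if_pos hKi, if_pos (hiff.mp hKi)]
        exact swap_ne i j hcij
      · rw [if_neg hKi, if_neg (fun h => hKi (hiff.mpr h))]
        exact hcij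
    · push_neg at hjab
      rw [c'_eq j hjab.1 hjab.2]
      intro heq
      rcases c'_mem i hiab with h | h <;> rw [heq] at h
      · exact hjab.1 h
      · exact hjab.2 h
    · push_neg at hiab
      rw [c'_eq i hiab.1 hiab.2]
      intro heq
      rcases c'_mem j hjab with h | h <;> rw [← heq] at h
      · exact hiab.1 h
      · exact hiab.2 h
    · push_neg at hiab; push_neg at hjab
      rw [c'_eq i hiab.1 hiab.2, c'_eq j hjab.1 hjab.2]
      exact hcij
  refine ⟨c', ?_, ?_, ?_, ?_⟩
  · intro i hi j hj hij hf
    exact main i hi j hj hij (Or.inl hf) (hpf i hi j hj hij hf)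
  · intro i hi j hj hij hg
    exact main i hi j hj hij (Or.inr hg) (hpg i hi j hj hij hg)
  · -- no α at x0
    intro j hj hfj
    by_cases hjα : c j = α
    · exact absurd hjα (hα j hj hfj)
    by_cases hjβ : c j = β
    · have hnK : ¬ K j := by
        rintro ⟨m, pm⟩
        obtain ⟨_, hcj⟩ := W2 m j pm
        rcases Nat.mod_two_eq_zero_or_one m with hm | hm
        · rw [if_pos hm] at hcj; exact hjα hcj
        · exact W3 m j hm pm hfj
      rw [hc']; dsimp only
      rw [if_neg hnK, hjβ]
      exact fun h => hαβ h.symm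
    · rw [c'_eq j hjα hjβ]; exact hjα
  · -- no α at y0
    intro j hj hgj
    by_cases hjα : c j = α
    · have : j = j0 := by
        by_cases h : j = j0
        · exact h
        · exact absurd (hjα.trans hj0c.symm) (hpg j hj j0 hj0E h (hgj.trans hj0g.symm))
      subst this
      rw [hc']; dsimp only
      rw [if_pos hKj0, hjα]
      simp only [Equiv.swap_apply_left]
      exact fun h => hαβ h.symm
    · by_cases hjβ : c j = β
      · exact absurd hjβ (hβ j hj hgj)
      · rw [c'_eq j hjα hjβ]; exact hjα

/-- König's edge-coloring theorem, bipartite version, in incidence form. -/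
lemma konig (w : ℕ) (hw : 0 < w) (f : ι → A) (g : ι → B) (E : Finset ι)
    (hdf : ∀ x, (E.filter (fun i => f i = x)).card ≤ w)
    (hdg : ∀ y, (E.filter (fun i => g i = y)).card ≤ w) :
    ∃ c : ι → Fin w,
      (∀ i ∈ E, ∀ j ∈ E, i ≠ j → f i = f j → c i ≠ c j) ∧
      (∀ i ∈ E, ∀ j ∈ E, i ≠ j → g i = g j → c i ≠ c j) := by
  classical
  induction E using Finset.strongInduction with
  | _ E ih =>
  rcases Finset.eq_empty_or_nonempty E with rfl | ⟨i0, hi0⟩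
  · exact ⟨fun _ => ⟨0, hw⟩, by simp, by simp⟩
  have hss : E.erase i0 ⊂ E := Finset.erase_ssubset hi0
  obtain ⟨c, hpf, hpg⟩ := ih (E.erase i0) hss
    (fun x => le_trans (Finset.card_le_card
      (Finset.filter_subset_filter _ (Finset.erase_subset _ _))) (hdf x))
    (fun y => le_trans (Finset.card_le_card
      (Finset.filter_subset_filter _ (Finset.erase_subset _ _))) (hdg y))
  -- find a color missing at f i0 and at g i0
  have hcardf : (((E.erase i0).filter (fun i => f i = f i0)).image c).card < w := by
    have h1 : (E.erase i0).filter (fun i => f i = f i0)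
        = (E.filter (fun i => f i = f i0)).erase i0 := by
      ext x; simp [Finset.mem_filter, Finset.mem_erase]; tauto
    have hi0f : i0 ∈ E.filter (fun i => f i = f i0) := Finset.mem_filter.mpr ⟨hi0, rfl⟩
    calc (((E.erase i0).filter (fun i => f i = f i0)).image c).card
        ≤ ((E.erase i0).filter (fun i => f i = f i0)).card := Finset.card_image_le
      _ = (E.filter (fun i => f i = f i0)).card - 1 := by
          rw [h1, Finset.card_erase_of_mem hi0f]
      _ < w := by
          have := hdf (f i0)
          have hpos : 0 < (E.filter (fun i => f i = f i0)).card :=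
            Finset.card_pos.mpr ⟨i0, hi0f⟩
          omega
  have hcardg : (((E.erase i0).filter (fun i => g i = g i0)).image c).card < w := by
    have h1 : (E.erase i0).filter (fun i => g i = g i0)
        = (E.filter (fun i => g i = g i0)).erase i0 := by
      ext x; simp [Finset.mem_filter, Finset.mem_erase]; tauto
    have hi0g : i0 ∈ E.filter (fun i => g i = g i0) := Finset.mem_filter.mpr ⟨hi0, rfl⟩
    calc (((E.erase i0).filter (fun i => g i = g i0)).image c).card
        ≤ ((E.erase i0).filter (fun i => g i = g i0)).card := Finset.card_image_le
      _ = (E.filter (fun i => g i = g i0)).card - 1 := by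
          rw [h1, Finset.card_erase_of_mem hi0g]
      _ < w := by
          have := hdg (g i0)
          have hpos : 0 < (E.filter (fun i => g i = g i0)).card :=
            Finset.card_pos.mpr ⟨i0, hi0g⟩
          omega
  obtain ⟨α, -, hα'⟩ := Finset.exists_of_ssubset
    (show ((E.erase i0).filter (fun i => f i = f i0)).image c ⊂ Finset.univ from
      Finset.ssubset_univ_iff.mpr (fun h => by
        rw [h, Finset.card_univ, Fintype.card_fin] at hcardf; omega))
  obtain ⟨β, -, hβ'⟩ := Finset.exists_of_ssubset
    (show ((E.erase i0).filter (fun i => g i = g i0)).image c ⊂ Finset.univ from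
      Finset.ssubset_univ_iff.mpr (fun h => by
        rw [h, Finset.card_univ, Fintype.card_fin] at hcardg; omega))
  have hα : ∀ j ∈ E.erase i0, f j = f i0 → c j ≠ α :=
    fun j hj hf hc => hα' (Finset.mem_image.mpr ⟨j, Finset.mem_filter.mpr ⟨hj, hf⟩, hc⟩)
  have hβ : ∀ j ∈ E.erase i0, g j = g i0 → c j ≠ β :=
    fun j hj hg hc => hβ' (Finset.mem_image.mpr ⟨j, Finset.mem_filter.mpr ⟨hj, hg⟩, hc⟩)
  obtain ⟨c', hpf', hpg', hx0, hy0⟩ :=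
    kempe f g (E.erase i0) c hpf hpg (f i0) (g i0) α β hα hβ
  refine ⟨Function.update c' i0 α, ?_, ?_⟩
  · intro i hi j hj hij hfij
    by_cases hii0 : i = i0 <;> by_cases hji0 : j = i0
    · exact absurd (hii0.trans hji0.symm) hij
    · subst hii0
      rw [Function.update_self, Function.update_of_ne hji0]
      exact fun h => hx0 j (Finset.mem_erase.mpr ⟨hji0, hj⟩) hfij.symm h.symm
    · subst hji0
      rw [Function.update_self, Function.update_of_ne hii0]
      exact fun h => hx0 i (Finset.mem_erase.mpr ⟨hii0, hi⟩) hfij h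
    · rw [Function.update_of_ne hii0, Function.update_of_ne hji0]
      exact hpf' i (Finset.mem_erase.mpr ⟨hii0, hi⟩) j (Finset.mem_erase.mpr ⟨hji0, hj⟩) hij hfij
  · intro i hi j hj hij hgij
    by_cases hii0 : i = i0 <;> by_cases hji0 : j = i0
    · exact absurd (hii0.trans hji0.symm) hij
    · subst hii0
      rw [Function.update_self, Function.update_of_ne hji0]
      exact fun h => hy0 j (Finset.mem_erase.mpr ⟨hji0, hj⟩) hgij.symm h.symm
    · subst hji0
      rw [Function.update_self, Function.update_of_ne hii0]
      exact fun h => hy0 i (Finset.mem_erase.mpr ⟨hii0, hi⟩) hgij h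
    · rw [Function.update_of_ne hii0, Function.update_of_ne hji0]
      exact hpg' i (Finset.mem_erase.mpr ⟨hii0, hi⟩) j (Finset.mem_erase.mpr ⟨hji0, hj⟩) hij hgij

end Konig


/-- Strong (rainbow) vertex coloring of the union of two matchings of `w`-sets,
obtained from König's bipartite edge-coloring theorem. -/
lemma exists_rainbow {n w : ℕ} (hw : 0 < w) (F0 F1 : Finset (Finset (Fin n)))
    (hedge : ∀ e ∈ F0 ∪ F1, e.card = w)
    (hm0 : ∀ e ∈ F0, ∀ f ∈ F0, e ≠ f → Disjoint e f)
    (hm1 : ∀ e ∈ F1, ∀ f ∈ F1, e ≠ f → Disjoint e f) :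
    ∃ χ : Fin n → Fin w, ∀ e ∈ F0 ∪ F1, ∀ u ∈ e, ∀ v ∈ e, χ u = χ v → u = v := by
  classical
  set fmap : Fin n → Finset (Fin n) ⊕ Fin n := fun v =>
    if h : ∃ e, e ∈ F0 ∧ v ∈ e then Sum.inl h.choose else Sum.inr v with hfmap
  set gmap : Fin n → Finset (Fin n) ⊕ Fin n := fun v =>
    if h : ∃ e, e ∈ F1 ∧ v ∈ e then Sum.inl h.choose else Sum.inr v with hgmap
  have fchar : ∀ v e, fmap v = Sum.inl e → e ∈ F0 ∧ v ∈ e := by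
    intro v e hve
    rw [hfmap] at hve; dsimp only at hve
    split at hve
    · next h =>
      obtain rfl : h.choose = e := Sum.inl.inj hve
      exact h.choose_spec
    · exact absurd hve (by simp)
  have gchar : ∀ v e, gmap v = Sum.inl e → e ∈ F1 ∧ v ∈ e := by
    intro v e hve
    rw [hgmap] at hve; dsimp only at hve
    split at hve
    · next h =>
      obtain rfl : h.choose = e := Sum.inl.inj hve
      exact h.choose_spec
    · exact absurd hve (by simp)
  have key0 : ∀ e ∈ F0, ∀ v ∈ e, fmap v = Sum.inl e := by
    intro e he v hv
    have h : ∃ e, e ∈ F0 ∧ v ∈ e := ⟨e, he, hv⟩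
    rw [hfmap]; dsimp only
    rw [dif_pos h]
    congr 1
    by_contra hne
    exact (Finset.disjoint_left.mp (hm0 _ h.choose_spec.1 e he hne) h.choose_spec.2) hv
  have key1 : ∀ e ∈ F1, ∀ v ∈ e, gmap v = Sum.inl e := by
    intro e he v hv
    have h : ∃ e, e ∈ F1 ∧ v ∈ e := ⟨e, he, hv⟩
    rw [hgmap]; dsimp only
    rw [dif_pos h]
    congr 1
    by_contra hne
    exact (Finset.disjoint_left.mp (hm1 _ h.choose_spec.1 e he hne) h.choose_spec.2) hv
  have fchar2 : ∀ v u, fmap v = Sum.inr u → v = u := by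
    intro v u hv
    rw [hfmap] at hv; dsimp only at hv
    split at hv
    · exact absurd hv (by simp)
    · exact Sum.inr.inj hv
  have gchar2 : ∀ v u, gmap v = Sum.inr u → v = u := by
    intro v u hv
    rw [hgmap] at hv; dsimp only at hv
    split at hv
    · exact absurd hv (by simp)
    · exact Sum.inr.inj hv
  have hdeg : ∀ (fm : Fin n → Finset (Fin n) ⊕ Fin n)
      (_ : ∀ v e, fm v = Sum.inl e → e ∈ (F0 ∪ F1) ∧ v ∈ e)
      (_ : ∀ v u, fm v = Sum.inr u → v = u)
      (x : Finset (Fin n) ⊕ Fin n),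
      ((univ : Finset (Fin n)).filter (fun i => fm i = x)).card ≤ w := by
    intro fm hchar hchar2 x
    match x with
    | Sum.inl e =>
      rcases Finset.eq_empty_or_nonempty
        ((univ : Finset (Fin n)).filter (fun i => fm i = Sum.inl e)) with hemp | ⟨v0, hv0⟩
      · rw [hemp]; simp
      · have hv0' : fm v0 = Sum.inl e := (Finset.mem_filter.mp hv0).2
        have heF : e ∈ F0 ∪ F1 := (hchar v0 e hv0').1
        have hsub : (univ : Finset (Fin n)).filter (fun i => fm i = Sum.inl e) ⊆ e := by
          intro v hv
          exact (hchar v e (Finset.mem_filter.mp hv).2).2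
        exact (Finset.card_le_card hsub).trans (le_of_eq (hedge e heF))
    | Sum.inr u =>
      have hsub : (univ : Finset (Fin n)).filter (fun i => fm i = Sum.inr u) ⊆ {u} := by
        intro v hv
        have hv' : fm v = Sum.inr u := (Finset.mem_filter.mp hv).2
        simp [hchar2 v u hv']
      exact (Finset.card_le_card hsub).trans (by simpa using Nat.succ_le_of_lt hw)
  obtain ⟨c, hpf, hpg⟩ := konig w hw fmap gmap (univ : Finset (Fin n))
    (hdeg fmap (fun v e h => ⟨Finset.mem_union_left _ (fchar v e h).1, (fchar v e h).2⟩) fchar2)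
    (hdeg gmap (fun v e h => ⟨Finset.mem_union_right _ (gchar v e h).1, (gchar v e h).2⟩) gchar2)
  refine ⟨c, ?_⟩
  intro e he u hu v hv hcuv
  by_contra hne
  rcases Finset.mem_union.mp he with he0 | he1
  · exact hpf u (Finset.mem_univ u) v (Finset.mem_univ v) hne
      ((key0 e he0 u hu).trans (key0 e he0 v hv).symm) hcuv
  · exact hpg u (Finset.mem_univ u) v (Finset.mem_univ v) hne
      ((key1 e he1 u hu).trans (key1 e he1 v hv).symm) hcuv

/-- Symbol values: class `t` edge with pattern bit `b` gets value `1` or `2`. -/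
def tval (t : Fin 2) (b : Fin 2) : ZMod 3 := if b = t then 1 else 2

/-- Inverse of `tval t`. -/
def unval (t : Fin 2) (z : ZMod 3) : Fin 2 := if z = tval t 0 then 0 else 1

lemma tval_ne_zero : ∀ t b, tval t b ≠ 0 := by decide
lemma tval_inj : ∀ t b b', tval t b = tval t b' → b = b' := by decide
lemma tval_ne_of_ne : ∀ t t' b, t ≠ t' → tval t b ≠ tval t' b := by decide
lemma tval_unval : ∀ t z, z ≠ 0 → tval t (unval t z) = z := by decide
lemma fin_two : ∀ t : Fin 2, t = 0 ∨ t = 1 := by decide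

/-- The codeword with support `e` in class `t`, pattern `m`, coloring `χ`. -/
def wordOf {n w : ℕ} (χ : Fin n → Fin w) (t : Fin 2) (m : Fin w → Fin 2)
    (e : Finset (Fin n)) : Fin n → ZMod 3 :=
  fun v => if v ∈ e then tval t (m (χ v)) else 0

lemma support_wordOf {n w : ℕ} (χ : Fin n → Fin w) (t : Fin 2) (m : Fin w → Fin 2)
    (e : Finset (Fin n)) :
    (Finset.univ.filter fun v => wordOf χ t m e v ≠ 0) = e := by
  ext v
  by_cases hv : v ∈ e <;> simp [wordOf, hv, tval_ne_zero]

lemma hammingNorm_wordOf {n w : ℕ} (χ : Fin n → Fin w) (t : Fin 2) (m : Fin w → Fin 2)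
    (e : Finset (Fin n)) : hammingNorm (wordOf χ t m e) = e.card := by
  show (Finset.univ.filter fun v => wordOf χ t m e v ≠ 0).card = e.card
  rw [support_wordOf]


/-- Theorem: from a 2-good almost-regular edge-coloring of `K_n^w`
(a partition of all `w`-subsets of `[n]` into `r` matchings of size `⌊n/w⌋`,
grouped into pairs whose unions are linear hypergraphs), with `n ≡ a (mod w)`,
`2a < w`, and `r = C(n,w)/⌊n/w⌋` even, one obtains a tiling
`TOC_3(n,2w-1,w)`: a partition of all weight-`w` ternary words of length `n`
into `2^(w-1)·r` pairwise disjoint codes of size `2⌊n/w⌋` with pairwise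
Hamming distance at least `2w-1`. -/
theorem stmt16 (w n a r : ℕ) (hw : 0 < w) (hwn : w ≤ n)
    (ha : n % w = a) (h2a : 2 * a < w)
    (hr : Nat.choose n w = r * (n / w)) (hreven : Even r)
    (F : Fin (r / 2) → Fin 2 → Finset (Finset (Fin n)))
    (hcard : ∀ s t, (F s t).card = n / w)
    (hedge : ∀ s t, ∀ e ∈ F s t, e.card = w)
    (hmatch : ∀ s t, ∀ e ∈ F s t, ∀ f ∈ F s t, e ≠ f → Disjoint e f)
    (hpart : ∀ e : Finset (Fin n), e.card = w →
      ∃! p : Fin (r / 2) × Fin 2, e ∈ F p.1 p.2)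
    (hlinear : ∀ s, ∀ e ∈ F s 0 ∪ F s 1, ∀ f ∈ F s 0 ∪ F s 1,
      e ≠ f → (e ∩ f).card ≤ 1) :
    ∃ P : Finset (Finset (Fin n → ZMod 3)),
      P.card = 2 ^ (w - 1) * r ∧
      (∀ C ∈ P, C.card = 2 * (n / w) ∧ (∀ x ∈ C, hammingNorm x = w) ∧
        ∀ x ∈ C, ∀ y ∈ C, x ≠ y → 2 * w - 1 ≤ hammingDist x y) ∧
      (∀ C ∈ P, ∀ D ∈ P, C ≠ D → Disjoint C D) ∧
      ∀ x : Fin n → ZMod 3, hammingNorm x = w → ∃ C ∈ P, x ∈ C := by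
  classical
  have hn1 : 1 ≤ n / w := (Nat.one_le_div_iff hw).mpr hwn
  have memU : ∀ (s : Fin (r/2)) (t : Fin 2) e, e ∈ F s t → e ∈ F s 0 ∪ F s 1 := by
    intro s t e he
    rcases fin_two t with rfl | rfl
    · exact Finset.mem_union_left _ he
    · exact Finset.mem_union_right _ he
  have huniq : ∀ (s s' : Fin (r/2)) (t t' : Fin 2) e, e ∈ F s t → e ∈ F s' t' →
      s = s' ∧ t = t' := by
    intro s s' t t' e h h'
    have hc := hedge s t e h
    obtain ⟨p, -, hup⟩ := hpart e hc
    have e1 := hup (s, t) h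
    have e2 := hup (s', t') h'
    have h3 := e1.trans e2.symm
    exact ⟨congrArg Prod.fst h3, congrArg Prod.snd h3⟩
  -- rainbow colorings for each pair of matchings
  have hrb : ∀ s : Fin (r/2), ∃ χ : Fin n → Fin w,
      ∀ e ∈ F s 0 ∪ F s 1, ∀ u ∈ e, ∀ v ∈ e, χ u = χ v → u = v := by
    intro s
    refine exists_rainbow hw (F s 0) (F s 1) ?_ (hmatch s 0) (hmatch s 1)
    intro e he
    rcases Finset.mem_union.mp he with h | h
    · exact hedge s 0 e h
    · exact hedge s 1 e h
  choose χ hχ using hrb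
  -- surjectivity of the coloring on each edge
  have hsurj : ∀ s, ∀ e ∈ F s 0 ∪ F s 1, ∀ i : Fin w, ∃ v ∈ e, χ s v = i := by
    intro s e he i
    have hinj : Set.InjOn (χ s) ↑e := fun u hu v hv h => hχ s e he u hu v hv h
    have hce : e.card = w := by
      rcases Finset.mem_union.mp he with h | h
      · exact hedge s 0 e h
      · exact hedge s 1 e h
    have himg : e.image (χ s) = Finset.univ := by
      apply Finset.eq_univ_of_card
      rw [Finset.card_image_of_injOn hinj, Fintype.card_fin, hce]
    have hi : i ∈ e.image (χ s) := himg ▸ Finset.mem_univ i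
    obtain ⟨v, hv, hvi⟩ := Finset.mem_image.mp hi
    exact ⟨v, hv, hvi⟩
  set code : Fin (r/2) → (Fin w → Fin 2) → Finset (Fin n → ZMod 3) := fun s m =>
    (F s 0).image (wordOf (χ s) 0 m) ∪ (F s 1).image (wordOf (χ s) 1 m) with hcode
  have hmem : ∀ s m x, x ∈ code s m ↔ ∃ t e, e ∈ F s t ∧ wordOf (χ s) t m e = x := by
    intro s m x
    rw [hcode]; dsimp only
    simp only [Finset.mem_union, Finset.mem_image]
    constructor
    · rintro (⟨e, he, hx⟩ | ⟨e, he, hx⟩)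
      · exact ⟨0, e, he, hx⟩
      · exact ⟨1, e, he, hx⟩
    · rintro ⟨t, e, he, hx⟩
      rcases fin_two t with rfl | rfl
      · exact Or.inl ⟨e, he, hx⟩
      · exact Or.inr ⟨e, he, hx⟩
  -- identification of codewords
  have hident : ∀ s m t e s' m' t' e', e ∈ F s t → e' ∈ F s' t' →
      wordOf (χ s) t m e = wordOf (χ s') t' m' e' →
      s = s' ∧ t = t' ∧ e = e' ∧ m = m' := by
    intro s m t e s' m' t' e' he he' hx
    have hee : e = e' := by
      have h1 := support_wordOf (χ s) t m e
      have h2 := support_wordOf (χ s') t' m' e'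
      rw [← h1, ← h2, hx]
    subst hee
    obtain ⟨hss, htt⟩ := huniq s s' t t' e he he'
    subst hss; subst htt
    refine ⟨rfl, rfl, rfl, ?_⟩
    funext i
    obtain ⟨v, hv, hvi⟩ := hsurj s e (memU s t e he) i
    have hcv := congrFun hx v
    simp only [wordOf, if_pos hv] at hcv
    rw [hvi] at hcv
    exact tval_inj t _ _ hcv
  have hwinj : ∀ s m t, Set.InjOn (wordOf (χ s) t m) ↑(F s t) := by
    intro s m t e he f hf hef
    exact (hident s m t e s m t f (Finset.mem_coe.mp he) (Finset.mem_coe.mp hf) hef).2.2.1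
  have hcard_code : ∀ s m, (code s m).card = 2 * (n / w) := by
    intro s m
    have hd : Disjoint ((F s 0).image (wordOf (χ s) 0 m))
        ((F s 1).image (wordOf (χ s) 1 m)) := by
      rw [Finset.disjoint_left]
      intro x hx0 hx1
      obtain ⟨e, he, hxe⟩ := Finset.mem_image.mp hx0
      obtain ⟨f, hf, hxf⟩ := Finset.mem_image.mp hx1
      have h01 := (hident s m 0 e s m 1 f he hf (hxe.trans hxf.symm)).2.1
      exact absurd h01 (by decide)
    rw [hcode]; dsimp only
    rw [Finset.card_union_of_disjoint hd, Finset.card_image_of_injOn (hwinj s m 0),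
        Finset.card_image_of_injOn (hwinj s m 1), hcard s 0, hcard s 1]
    omega
  have hne_code : ∀ s m, (code s m).Nonempty := by
    intro s m
    apply Finset.card_pos.mp
    rw [hcard_code s m]
    omega
  -- distance bound
  have hdist : ∀ s m t t' e f, e ∈ F s t → f ∈ F s t' → e ≠ f →
      2 * w - 1 ≤ hammingDist (wordOf (χ s) t m e) (wordOf (χ s) t' m f) := by
    intro s m t t' e f he hf hef
    have hsub : e ∪ f ⊆ Finset.univ.filter
        (fun v => wordOf (χ s) t m e v ≠ wordOf (χ s) t' m f v) := by
      intro v hv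
      refine Finset.mem_filter.mpr ⟨Finset.mem_univ v, ?_⟩
      by_cases hve : v ∈ e <;> by_cases hvf : v ∈ f
      · have htt : t ≠ t' := by
          rintro rfl
          exact (Finset.disjoint_left.mp (hmatch s t e he f hf hef) hve) hvf
        simp only [wordOf, if_pos hve, if_pos hvf]
        exact tval_ne_of_ne t t' _ htt
      · simp only [wordOf, if_pos hve, if_neg hvf]
        exact tval_ne_zero t _
      · simp only [wordOf, if_neg hve, if_pos hvf]
        exact fun h => tval_ne_zero t' _ h.symm
      · exact absurd (Finset.mem_union.mp hv) (by simp [hve, hvf])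
    have hcap : (e ∩ f).card ≤ 1 := hlinear s e (memU s t e he) f (memU s t' f hf) hef
    have hsum := Finset.card_union_add_card_inter e f
    have hce : e.card = w := hedge s t e he
    have hcf : f.card = w := hedge s t' f hf
    have h1 : 2 * w - 1 ≤ (e ∪ f).card := by omega
    calc 2 * w - 1 ≤ (e ∪ f).card := h1
      _ ≤ (Finset.univ.filter
            (fun v => wordOf (χ s) t m e v ≠ wordOf (χ s) t' m f v)).card :=
          Finset.card_le_card hsub
      _ = hammingDist (wordOf (χ s) t m e) (wordOf (χ s) t' m f) := rfl
  set P := (Finset.univ : Finset (Fin (r/2) × (Fin w → Fin 2))).image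
    (fun p => code p.1 p.2) with hP
  have hcode_inj : ∀ s m s' m', (code s m ∩ code s' m').Nonempty → s = s' ∧ m = m' := by
    rintro s m s' m' ⟨x, hx⟩
    obtain ⟨hx1, hx2⟩ := Finset.mem_inter.mp hx
    obtain ⟨t, e, he, hxe⟩ := (hmem s m x).mp hx1
    obtain ⟨t', e', he', hxe'⟩ := (hmem s' m' x).mp hx2
    have h := hident s m t e s' m' t' e' he he' (hxe.trans hxe'.symm)
    exact ⟨h.1, h.2.2.2⟩
  have hPdisjoint : ∀ s m s' m', (s, m) ≠ (s', m') → Disjoint (code s m) (code s' m') := by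
    intro s m s' m' hne
    by_contra hnd
    obtain ⟨h1, h2⟩ := hcode_inj s m s' m'
      (Finset.not_disjoint_iff_nonempty_inter.mp hnd)
    exact hne (by rw [h1, h2])
  have hPcard : P.card = 2 ^ (w - 1) * r := by
    have hPinj : Set.InjOn (fun p : Fin (r/2) × (Fin w → Fin 2) => code p.1 p.2)
        ↑(Finset.univ : Finset (Fin (r/2) × (Fin w → Fin 2))) := by
      rintro ⟨s, m⟩ - ⟨s', m'⟩ - h
      dsimp only at h
      obtain ⟨x, hx⟩ := hne_code s m
      have hxin : (code s m ∩ code s' m').Nonempty :=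
        ⟨x, Finset.mem_inter.mpr ⟨hx, h ▸ hx⟩⟩
      obtain ⟨h1, h2⟩ := hcode_inj s m s' m' hxin
      rw [Prod.mk.injEq]
      exact ⟨h1, h2⟩
    rw [hP, Finset.card_image_of_injOn hPinj, Finset.card_univ, Fintype.card_prod,
      Fintype.card_fin, Fintype.card_fun, Fintype.card_fin, Fintype.card_fin]
    obtain ⟨k, hk⟩ := hreven
    subst hk
    have h2 : (k + k) / 2 = k := by omega
    rw [h2]
    obtain ⟨w', rfl⟩ : ∃ w', w = w' + 1 := ⟨w - 1, by omega⟩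
    rw [Nat.add_sub_cancel, pow_succ]
    ring
  refine ⟨P, hPcard, ?_, ?_, ?_⟩
  · intro C hC
    obtain ⟨⟨s, m⟩, -, rfl⟩ := Finset.mem_image.mp hC
    refine ⟨hcard_code s m, ?_, ?_⟩
    · intro x hx
      obtain ⟨t, e, he, hxe⟩ := (hmem s m x).mp hx
      rw [← hxe, hammingNorm_wordOf, hedge s t e he]
    · intro x hx y hy hxy
      obtain ⟨t, e, he, hxe⟩ := (hmem s m x).mp hx
      obtain ⟨t', e', he', hye⟩ := (hmem s m y).mp hy
      have hef : e ≠ e' := by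
        rintro rfl
        obtain ⟨-, rfl⟩ := huniq s s t t' e he he'
        exact hxy (hxe.symm.trans hye)
      rw [← hxe, ← hye]
      exact hdist s m t t' e e' he he' hef
  · intro C hC D hD hCD
    obtain ⟨⟨s, m⟩, -, rfl⟩ := Finset.mem_image.mp hC
    obtain ⟨⟨s', m'⟩, -, rfl⟩ := Finset.mem_image.mp hD
    apply hPdisjoint
    intro h
    exact hCD (by rw [show s = s' from congrArg Prod.fst h,
      show m = m' from congrArg Prod.snd h])
  · intro x hx
    set e := Finset.univ.filter (fun v => x v ≠ 0) with he_def
    have hec : e.card = w := hx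
    obtain ⟨⟨s, t⟩, hp, -⟩ := hpart e hec
    dsimp only at hp
    have hs := hsurj s e (memU s t e hp)
    choose vv hv1 hv2 using hs
    set m : Fin w → Fin 2 := fun i => unval t (x (vv i)) with hm
    have hxw : wordOf (χ s) t m e = x := by
      funext v
      by_cases hv : v ∈ e
      · have hvv_eq : vv (χ s v) = v :=
          hχ s e (memU s t e hp) (vv (χ s v)) (hv1 _) v hv (hv2 _)
        simp only [wordOf, if_pos hv, hm]
        rw [hvv_eq]
        refine tval_unval t (x v) ?_
        have hv' : v ∈ Finset.univ.filter (fun u => x u ≠ 0) := by rw [← he_def]; exact hv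
        exact (Finset.mem_filter.mp hv').2
      · simp only [wordOf, if_neg hv]
        by_contra hnz
        apply hv
        rw [he_def]
        exact Finset.mem_filter.mpr ⟨Finset.mem_univ v, fun h => hnz h.symm⟩
    refine ⟨code s m, Finset.mem_image.mpr ⟨(s, m), Finset.mem_univ _, rfl⟩, ?_⟩
    exact (hmem s m x).mpr ⟨t, e, hp, hxw⟩
end

section
/- If there exists a Steiner system S(t,w',n) and a generalized maximum H-packing GMHP*(t,w,w',g) with C(w',t)·g^{t-1}/C(w,t) blocks, then there exists a GMHP*(t,w,n,g) with C(n,t)·g^{t-1}/C(w,t) blocks. -/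
/-- `B` is a Steiner system `S(t,k,n)` on `Fin n`: all blocks have size `k`
and every `t`-subset lies in exactly one block. -/
def isSteiner (t k n : ℕ) (B : Finset (Finset (Fin n))) : Prop :=
  (∀ b ∈ B, b.card = k) ∧
  ∀ T : Finset (Fin n), T.card = t → ∃! b, b ∈ B ∧ T ⊆ b

/-- `C` is (the code of) an H-packing `HP(n,g,w,t)` with minimum Hamming
distance `2(w-t+1)`: a set of weight-`w` words of length `n` over `Z_{g+1}`
with pairwise distance at least `2(w-t+1)`.  (The distance condition implies
that every `t`-subset of positions with fixed nonzero values is covered by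
at most one codeword.)  It is a `GMHP*(t,w,n,g)` when it has exactly
`C(n,t)·g^(t-1)/C(w,t)` codewords. -/
def isHPCode (g t w n : ℕ) (C : Finset (Fin n → ZMod (g + 1))) : Prop :=
  (∀ x ∈ C, hammingNorm x = w) ∧
  ∀ x ∈ C, ∀ y ∈ C, x ≠ y → 2 * (w - t + 1) ≤ hammingDist x y

open Finset

def extFun {n w' : ℕ} (b : Finset (Fin n)) (h : b.card = w') {α : Type*} [Zero α]
    (x : Fin w' → α) : Fin n → α :=
  fun i => if hi : i ∈ b then x ((b.orderIsoOfFin h).symm ⟨i, hi⟩) else 0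

lemma extFun_apply {n w' : ℕ} (b : Finset (Fin n)) (h : b.card = w') {α : Type*} [Zero α]
    (x : Fin w' → α) (j : Fin w') : extFun b h x ((b.orderIsoOfFin h) j : Fin n) = x j := by
  have h1 : ((b.orderIsoOfFin h) j : Fin n) ∈ b := ((b.orderIsoOfFin h) j).2
  rw [extFun, dif_pos h1]
  exact congrArg x (by rw [Subtype.coe_eta, OrderIso.symm_apply_apply])

lemma extFun_supp {n w' : ℕ} (b : Finset (Fin n)) (h : b.card = w') {α : Type*} [Zero α]
    (x : Fin w' → α) (i : Fin n) (hi : extFun b h x i ≠ 0) : i ∈ b := by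
  by_contra hc
  simp [extFun, hc] at hi

lemma extFun_inj {n w' : ℕ} (b : Finset (Fin n)) (h : b.card = w') {α : Type*} [Zero α] :
    Function.Injective (extFun b h (α := α)) := by
  intro x y hxy
  funext j
  rw [← extFun_apply b h x j, ← extFun_apply b h y j, hxy]

lemma extFun_dist {n w' : ℕ} (b : Finset (Fin n)) (h : b.card = w') {α : Type*} [Zero α]
    [DecidableEq α] (x y : Fin w' → α) :
    hammingDist (extFun b h x) (extFun b h y) = hammingDist x y := by
  unfold hammingDist
  refine (Finset.card_bij (fun j _ => ((b.orderIsoOfFin h) j : Fin n)) ?_ ?_ ?_).symm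
  · intro j hj
    simp only [mem_filter, mem_univ, true_and] at hj ⊢
    rw [extFun_apply, extFun_apply]
    exact hj
  · intro j1 _ j2 _ hq
    exact (b.orderIsoOfFin h).injective (Subtype.ext hq)
  · intro i hi
    simp only [mem_filter, mem_univ, true_and] at hi
    have hib : i ∈ b := by
      by_contra hc
      simp [extFun, hc] at hi
    refine ⟨(b.orderIsoOfFin h).symm ⟨i, hib⟩, ?_, ?_⟩
    · simp only [mem_filter, mem_univ, true_and]
      simpa [extFun, hib] using hi
    · simp

lemma extFun_norm {n w' : ℕ} (b : Finset (Fin n)) (h : b.card = w') {α : Type*} [Zero α]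
    [DecidableEq α] (x : Fin w' → α) :
    hammingNorm (extFun b h x) = hammingNorm x := by
  have h0 : extFun b h (0 : Fin w' → α) = 0 := by
    funext i
    simp [extFun]
  rw [← hammingDist_zero_right, ← hammingDist_zero_right, ← h0, extFun_dist]


/-- If there exists a Steiner system `S(t,w',n)` and a generalized maximum
H-packing `GMHP*(t,w,w',g)` with `C(w',t)·g^(t-1)/C(w,t)` blocks, then there
exists a `GMHP*(t,w,n,g)` with `C(n,t)·g^(t-1)/C(w,t)` blocks. -/
theorem stmt19 (g t w w' n : ℕ)
    (hS : ∃ B : Finset (Finset (Fin n)), isSteiner t w' n B)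
    (hG : ∃ C : Finset (Fin w' → ZMod (g + 1)), isHPCode g t w w' C ∧
      C.card * Nat.choose w t = Nat.choose w' t * g ^ (t - 1)) :
    ∃ C : Finset (Fin n → ZMod (g + 1)), isHPCode g t w n C ∧
      C.card * Nat.choose w t = Nat.choose n t * g ^ (t - 1) := by
  classical
  obtain ⟨B, hBcard, hBcover⟩ := hS
  obtain ⟨C', ⟨hC'norm, hC'dist⟩, hcount⟩ := hG
  by_cases htn : n < t
  · exact ⟨∅, ⟨by simp, by simp⟩, by simp [Nat.choose_eq_zero_of_lt htn]⟩
  push_neg at htn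
  have htw' : t ≤ w' := by
    obtain ⟨T, -, hTcard⟩ := Finset.exists_subset_card_eq (s := (univ : Finset (Fin n))) (n := t) (by simpa using htn)
    obtain ⟨b, ⟨hbB, hTb⟩, -⟩ := hBcover T hTcard
    calc t = T.card := hTcard.symm
    _ ≤ b.card := card_le_card hTb
    _ = w' := hBcard b hbB
  by_cases htw : w < t
  · have h0 : g ^ (t - 1) = 0 := by
      have h := hcount
      rw [Nat.choose_eq_zero_of_lt htw, Nat.mul_zero] at h
      have hpos : 0 < Nat.choose w' t := Nat.choose_pos htw'
      rcases Nat.mul_eq_zero.mp h.symm with h' | h'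
      · omega
      · exact h'
    exact ⟨∅, ⟨by simp, by simp⟩, by simp [h0]⟩
  push_neg at htw
  have hblock : ∀ b1 ∈ B, ∀ b2 ∈ B, b1 ≠ b2 → (b1 ∩ b2).card < t := by
    intro b1 h1 b2 h2 hne
    by_contra hc
    push_neg at hc
    obtain ⟨T, hTsub, hTcard⟩ := Finset.exists_subset_card_eq (s := b1 ∩ b2) (n := t) hc
    obtain ⟨u, -, huniq⟩ := hBcover T hTcard
    exact hne ((huniq b1 ⟨h1, hTsub.trans inter_subset_left⟩).trans
      (huniq b2 ⟨h2, hTsub.trans inter_subset_right⟩).symm)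
  set F : Finset (Fin n) → Finset (Fin n → ZMod (g + 1)) :=
    fun b => if h : b.card = w' then C'.image (extFun b h) else ∅ with hF
  have hFb : ∀ b (hb : b ∈ B), F b = C'.image (extFun b (hBcard b hb)) :=
    fun b hb => dif_pos (hBcard b hb)
  have hFmem : ∀ b (hb : b ∈ B), ∀ z ∈ F b,
      hammingNorm z = w ∧ ∀ i, z i ≠ 0 → i ∈ b := by
    intro b hb z hz
    rw [hFb b hb] at hz
    obtain ⟨x, hx, rfl⟩ := Finset.mem_image.mp hz
    exact ⟨(extFun_norm _ _ x).trans (hC'norm x hx), fun i => extFun_supp _ _ x i⟩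
  have hcross : ∀ b1 ∈ B, ∀ b2 ∈ B, b1 ≠ b2 → ∀ z1 ∈ F b1, ∀ z2 ∈ F b2,
      z1 ≠ z2 ∧ 2 * (w - t + 1) ≤ hammingDist z1 z2 := by
    intro b1 h1 b2 h2 hne z1 hz1 z2 hz2
    obtain ⟨hn1, hs1⟩ := hFmem b1 h1 z1 hz1
    obtain ⟨hn2, hs2⟩ := hFmem b2 h2 z2 hz2
    set s1 := univ.filter (fun i => z1 i ≠ 0) with hs1def
    set s2 := univ.filter (fun i => z2 i ≠ 0) with hs2def
    have hs1b : s1 ⊆ b1 := fun i hi => hs1 i (mem_filter.mp hi).2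
    have hs2b : s2 ⊆ b2 := fun i hi => hs2 i (mem_filter.mp hi).2
    have hs1card : s1.card = w := hn1
    have hs2card : s2.card = w := hn2
    have hinter : (s1 ∩ s2).card < t :=
      lt_of_le_of_lt (card_le_card (inter_subset_inter hs1b hs2b)) (hblock b1 h1 b2 h2 hne)
    have hid1 := card_sdiff_add_card_inter s1 s2
    have hid2 := card_sdiff_add_card_inter s2 s1
    rw [inter_comm] at hid2
    have hsub : (s1 \ s2) ∪ (s2 \ s1) ⊆ univ.filter (fun i => z1 i ≠ z2 i) := by
      intro i hi
      simp only [mem_union, mem_sdiff, hs1def, hs2def, mem_filter, mem_univ, true_and,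
        not_not] at hi ⊢
      rcases hi with ⟨h1', h2'⟩ | ⟨h1', h2'⟩
      · rw [h2']; exact h1'
      · rw [h2']; exact fun hh => h1' hh.symm
    have hdlb : (s1 \ s2).card + (s2 \ s1).card ≤ hammingDist z1 z2 := by
      rw [← card_union_of_disjoint disjoint_sdiff_sdiff]
      exact card_le_card hsub
    constructor
    · rintro rfl
      have : s1 ⊆ b1 ∩ b2 := subset_inter hs1b hs2b
      have := card_le_card this
      have := hblock b1 h1 b2 h2 hne
      omega
    · omega
  refine ⟨B.biUnion F, ⟨?_, ?_⟩, ?_⟩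
  · intro z hz
    obtain ⟨b, hb, hzb⟩ := Finset.mem_biUnion.mp hz
    exact (hFmem b hb z hzb).1
  · intro z1 hz1 z2 hz2 hne
    obtain ⟨b1, h1, hzb1⟩ := Finset.mem_biUnion.mp hz1
    obtain ⟨b2, h2, hzb2⟩ := Finset.mem_biUnion.mp hz2
    by_cases hbb : b1 = b2
    · subst hbb
      rw [hFb b1 h1] at hzb1 hzb2
      obtain ⟨x, hx, rfl⟩ := Finset.mem_image.mp hzb1
      obtain ⟨y, hy, rfl⟩ := Finset.mem_image.mp hzb2
      rw [extFun_dist]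
      exact hC'dist x hx y hy (fun hh => hne (by rw [hh]))
    · exact (hcross b1 h1 b2 h2 hbb z1 hzb1 z2 hzb2).2
  · have hdisjF : ∀ b1 ∈ B, ∀ b2 ∈ B, b1 ≠ b2 → Disjoint (F b1) (F b2) := by
      intro b1 h1 b2 h2 hne
      rw [Finset.disjoint_left]
      intro z hz1 hz2
      exact (hcross b1 h1 b2 h2 hne z hz1 z hz2).1 rfl
    have hcard : (B.biUnion F).card = B.card * C'.card := by
      rw [Finset.card_biUnion (fun b1 h1 b2 h2 hne => hdisjF b1 h1 b2 h2 hne)]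
      rw [Finset.sum_congr rfl (fun b hb => by
        rw [hFb b hb, Finset.card_image_of_injective _ (extFun_inj b (hBcard b hb))])]
      rw [Finset.sum_const, smul_eq_mul]
    have hsteiner : B.card * Nat.choose w' t = Nat.choose n t := by
      have hset : (univ : Finset (Fin n)).powersetCard t
          = B.biUnion (fun b => b.powersetCard t) := by
        ext T
        simp only [mem_powersetCard, mem_biUnion]
        constructor
        · rintro ⟨-, hTcard⟩
          obtain ⟨b, ⟨hbB, hTb⟩, -⟩ := hBcover T hTcard
          exact ⟨b, hbB, hTb, hTcard⟩
        · rintro ⟨b, -, -, hTcard⟩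
          exact ⟨subset_univ T, hTcard⟩
      have hc := congrArg Finset.card hset
      rw [card_powersetCard, card_univ, Fintype.card_fin] at hc
      rw [Finset.card_biUnion (fun b1 h1 b2 h2 hne => ?_)] at hc
      · rw [Finset.sum_congr rfl (fun b hb => by
          rw [card_powersetCard, hBcard b hb]), Finset.sum_const, smul_eq_mul] at hc
        exact hc.symm
      · rw [Function.onFun, Finset.disjoint_left]
        intro T hT1 hT2
        rw [mem_powersetCard] at hT1 hT2
        obtain ⟨u, -, huniq⟩ := hBcover T hT1.2
        exact hne ((huniq b1 ⟨h1, hT1.1⟩).trans (huniq b2 ⟨h2, hT2.1⟩).symm)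
    rw [hcard, mul_assoc, hcount, ← mul_assoc, hsteiner]
end
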